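/- arXiv:1508.07217 — 3 statements merged into one kernel-verified Lean document; each statement's English description precedes it below -/
import Mathlib

section
/- Let f be an isomorphism of anti-twinned graphs R(G) → R(H) and let v be a vertex of G with f(v') ≠ f(v)'. Then the map g obtained from f by swapping the images of v' and f⁻¹(f(v)') (i.e., g(v') = f(v)', g(f⁻¹(f(v)')) = f(v'), and g = f elsewhere) is again an isomorphism of R(G) to R(H). -/
/-- An oriented graph: a loopless digraph with no 2-cycles (arc relation is asymmetric). -/
structure OGraph (V : Type) where
  arc : V → V → Prop
  asymm : ∀ u v, arc u v → ¬ arc v u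

namespace OGraph

/-- Pushing a set `S` of vertices reverses exactly the arcs with exactly one endpoint in `S`. -/
def push {V : Type} (G : OGraph V) (S : Set V) : OGraph V where
  arc u v := (Xor' (u ∈ S) (v ∈ S) ∧ G.arc v u) ∨ (¬ Xor' (u ∈ S) (v ∈ S) ∧ G.arc u v)
  asymm := by
    intro u v h h'
    have h1 := G.asymm u v
    have h2 := G.asymm v u
    unfold Xor' Xor at h h'
    tauto

/-- Homomorphism of oriented graphs. -/
def IsHom {V W : Type} (G : OGraph V) (H : OGraph W) (f : V → W) : Prop :=
  ∀ u v, G.arc u v → H.arc (f u) (f v)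

/-- Isomorphism of oriented graphs along an equivalence. -/
def IsIso {V W : Type} (G : OGraph V) (H : OGraph W) (e : V ≃ W) : Prop :=
  ∀ u v, G.arc u v ↔ H.arc (e u) (e v)

/-- The anti-twinned graph `R(G)` on two copies of the vertices:
`inl` is the original copy, `inr` the pushed (primed) copy. -/
def antiTwin {V : Type} (G : OGraph V) : OGraph (V ⊕ V) where
  arc x y :=
    match x, y with
    | Sum.inl u, Sum.inl v => G.arc u v
    | Sum.inr u, Sum.inr v => G.arc u v
    | Sum.inl u, Sum.inr v => G.arc v u
    | Sum.inr u, Sum.inl v => G.arc v u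
  asymm := by
    rintro (u | u) (v | v) h h' <;> exact G.asymm _ _ h h'

/-- The anti-twin of a vertex of `R(G)`: `x'` with `x'' = x`. -/
def tw {V : Type} : V ⊕ V → V ⊕ V := Sum.elim Sum.inr Sum.inl

/-- `H` is an orientation of the simple graph `G`. -/
def IsOrientationOf {V : Type} (H : OGraph V) (G : SimpleGraph V) : Prop :=
  (∀ u v, H.arc u v → G.Adj u v) ∧ (∀ u v, G.Adj u v → H.arc u v ∨ H.arc v u)

end OGraph

/-- The directed 3-cycle. -/
def C3 : OGraph (Fin 3) where
  arc u v := v = u + 1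
  asymm := by decide

/-!
If `f : R(G) → R(H)` is an isomorphism, then `f(x')` and `f(x)'` are twins in `R(H)`: both have
out-neighbourhood `f(N⁻(x))` and in-neighbourhood `f(N⁺(x))`, because `N⁺(y') = N⁻(y)` and
`N⁻(y') = N⁺(y)` hold in `R(G)` and in `R(H)`. Swapping two twins is an automorphism, and `g` is
`f` followed by the swap of `f(v')` and `f(v)'`.
-/

namespace OGraph

variable {V W : Type}

def Twins (G : OGraph V) (a b : V) : Prop :=
  (∀ y, G.arc a y ↔ G.arc b y) ∧ (∀ y, G.arc y a ↔ G.arc y b)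

theorem IsIso.trans {U : Type} {G : OGraph U} {H : OGraph V} {K : OGraph W} {f : U ≃ V}
    {e : V ≃ W} (hf : IsIso G H f) (he : IsIso H K e) : IsIso G K (f.trans e) :=
  fun u v => (hf u v).trans (he (f u) (f v))

namespace Twins

variable [DecidableEq V] {G : OGraph V} {a b : V}

theorem arc_swap_left (h : G.Twins a b) {p q : V} (hpq : G.arc p q) :
    G.arc (Equiv.swap a b p) q := by
  rw [Equiv.swap_apply_def]
  split_ifs with hpa hpb
  · exact (h.1 q).1 (hpa ▸ hpq)
  · exact (h.1 q).2 (hpb ▸ hpq)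
  · exact hpq

theorem arc_swap_right (h : G.Twins a b) {p q : V} (hpq : G.arc p q) :
    G.arc p (Equiv.swap a b q) := by
  rw [Equiv.swap_apply_def]
  split_ifs with hqa hqb
  · exact (h.2 p).1 (hqa ▸ hpq)
  · exact (h.2 p).2 (hqb ▸ hpq)
  · exact hpq

theorem isIso_swap (h : G.Twins a b) : IsIso G G (Equiv.swap a b) := by
  have hmap : ∀ p q, G.arc p q → G.arc (Equiv.swap a b p) (Equiv.swap a b q) :=
    fun p q hpq => h.arc_swap_right (h.arc_swap_left hpq)
  refine fun p q => ⟨hmap p q, fun hpq => ?_⟩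
  simpa only [Equiv.swap_apply_self] using hmap _ _ hpq

end Twins

theorem antiTwin_arc_tw_left (G : OGraph V) (x y : V ⊕ V) :
    G.antiTwin.arc (tw x) y ↔ G.antiTwin.arc y x := by
  cases x <;> cases y <;> exact Iff.rfl

theorem antiTwin_arc_tw_right (G : OGraph V) (x y : V ⊕ V) :
    G.antiTwin.arc y (tw x) ↔ G.antiTwin.arc x y := by
  cases x <;> cases y <;> exact Iff.rfl

theorem IsIso.twins_apply_tw_tw_apply {G : OGraph V} {H : OGraph W} {f : V ⊕ V ≃ W ⊕ W}
    (hf : IsIso G.antiTwin H.antiTwin f) (x : V ⊕ V) :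
    H.antiTwin.Twins (f (tw x)) (tw (f x)) := by
  constructor <;> intro y <;> obtain ⟨z, rfl⟩ := f.surjective y
  · calc H.antiTwin.arc (f (tw x)) (f z)
        ↔ G.antiTwin.arc z x := (hf _ _).symm.trans (antiTwin_arc_tw_left G x z)
      _ ↔ H.antiTwin.arc (tw (f x)) (f z) := (hf z x).trans (antiTwin_arc_tw_left H _ _).symm
  · calc H.antiTwin.arc (f z) (f (tw x))
        ↔ G.antiTwin.arc x z := (hf _ _).symm.trans (antiTwin_arc_tw_right G x z)
      _ ↔ H.antiTwin.arc (f z) (tw (f x)) := (hf x z).trans (antiTwin_arc_tw_right H _ _).symm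

end OGraph

theorem swap_images_still_iso_general {V W : Type} [DecidableEq W] (G : OGraph V) (H : OGraph W)
    (f : (V ⊕ V) ≃ (W ⊕ W)) (hf : OGraph.IsIso G.antiTwin H.antiTwin f)
    (v : V) :
    OGraph.IsIso G.antiTwin H.antiTwin
      (f.trans (Equiv.swap (f (OGraph.tw (Sum.inl v))) (OGraph.tw (f (Sum.inl v))))) :=
  hf.trans (hf.twins_apply_tw_tw_apply (Sum.inl v)).isIso_swap

/-- If `f : R(G) ≃ R(H)` is an isomorphism and `v` is a vertex of `G` with
`f(v') ≠ f(v)'`, then the map `g` obtained from `f` by swapping the images of `v'` and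
`f⁻¹(f(v)')` (so `g(v') = f(v)'`, `g(f⁻¹(f(v)')) = f(v')`, `g = f` elsewhere) is again
an isomorphism of `R(G)` to `R(H)`. -/
theorem swap_images_still_iso {V W : Type} [DecidableEq W] (G : OGraph V) (H : OGraph W)
    (f : (V ⊕ V) ≃ (W ⊕ W)) (hf : OGraph.IsIso G.antiTwin H.antiTwin f)
    (v : V) (hv : f (OGraph.tw (Sum.inl v)) ≠ OGraph.tw (f (Sum.inl v))) :
    OGraph.IsIso G.antiTwin H.antiTwin
      (f.trans (Equiv.swap (f (OGraph.tw (Sum.inl v))) (OGraph.tw (f (Sum.inl v))))) :=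
  swap_images_still_iso_general G H f hf v
end

section
/- For every oriented path a1a2...am of length m−1 ≥ 4 (any orientation of edges) and any assignment ψ of distinct vertices of the directed 3-cycle C3 to a1 and am, one can push a subset of the internal vertices {a2,...,a_{m−1}} so that the resulting oriented path admits a homomorphism to the directed 3-cycle extending ψ. -/
/-!
Along an oriented path, a homomorphism to `C3` is a walk in `ℤ/3` that moves by `+1` across each
edge traversed forwards and by `-1` across each edge traversed backwards, so it exists with the
prescribed end values iff the signed count of edges is `ψ₁ - ψ₀`, a nonzero residue modulo 3.
Pushing an internal vertex reverses its two incident edges. On a path with four edges every nonzero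
residue is reached by some pushing, whatever the pushing state of the far endpoint (a finite
check), and each further edge is steered by the state of its new internal vertex to contribute the
residue still missing.
-/

open Finset

namespace OGraph

variable {V : Type} (G : OGraph V)

theorem arc_or_arc_of_push_arc {S : Set V} {u v : V} (h : (G.push S).arc u v) :
    G.arc u v ∨ G.arc v u := by
  rcases h with ⟨-, h⟩ | ⟨-, h⟩
  exacts [Or.inr h, Or.inl h]

open Classical in
/-- `decide (G.arc u v) ^^ s u ^^ s v` is the direction bit of the edge `uv` after pushing
`{w | s w}`. -/
theorem push_arc_decide_xor (s : V → Bool) {u v : V} (h : (G.push {w | s w = true}).arc u v) :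
    (decide (G.arc u v) ^^ s u ^^ s v) = true ∧ (decide (G.arc v u) ^^ s v ^^ s u) = false := by
  have hvu := G.asymm v u
  have huv := G.asymm u v
  rcases h with ⟨hx, h⟩ | ⟨hx, h⟩
  · have hx : Xor (s u = true) (s v = true) := hx
    cases hu : s u <;> cases hv : s v <;> simp_all
  · have hx : ¬Xor (s u = true) (s v = true) := hx
    cases hu : s u <;> cases hv : s v <;> simp_all

end OGraph

/-- The displacement in `C3` across an edge traversed forwards (`true`) or backwards (`false`). -/
def step (b : Bool) : Fin 3 := if b then 1 else -1

theorem exists_step_ne (t : Fin 3) : ∃ e, step e ≠ t := by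
  revert t; decide

def walk (ψ₀ : Fin 3) (d : ℕ → Bool) (n : ℕ) : Fin 3 := ψ₀ + ∑ i ∈ range n, step (d i)

theorem walk_succ (ψ₀ : Fin 3) (d : ℕ → Bool) (n : ℕ) :
    walk ψ₀ d (n + 1) = walk ψ₀ d n + step (d n) := by
  rw [walk, walk, sum_range_succ, add_assoc]

theorem isHom_C3_walk {m : ℕ} (H : OGraph (Fin m)) (ψ₀ : Fin 3) (d : ℕ → Bool)
    (hd : ∀ a b, H.arc a b →
      (a.val + 1 = b.val ∧ d a = true) ∨ (b.val + 1 = a.val ∧ d b = false)) :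
    H.IsHom C3 (fun v => walk ψ₀ d v) := by
  intro a b hab
  show walk ψ₀ d b = walk ψ₀ d a + 1
  rcases hd a b hab with ⟨hb, hda⟩ | ⟨ha, hdb⟩
  · rw [← hb, walk_succ, hda, step, if_pos rfl]
  · rw [← ha, walk_succ, hdb, step, if_neg Bool.false_ne_true, neg_add_cancel_right]

/-- `o i` is the orientation of the `i`-th edge of a path with `k` edges and `s` marks the pushed
vertices: the first vertex is never pushed, the last one has the prescribed state `b`. -/
def AllDisplacementsReachable (k : ℕ) : Prop :=
  ∀ (o : ℕ → Bool) (b : Bool) (t : Fin 3), t ≠ 0 →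
    ∃ s : ℕ → Bool, s 0 = false ∧ s k = b ∧ ∑ i ∈ range k, step (o i ^^ s i ^^ s (i + 1)) = t

theorem allDisplacementsReachable_four : AllDisplacementsReachable 4 := by
  intro o b t ht
  obtain ⟨s₁, s₂, s₃, h⟩ : ∃ s₁ s₂ s₃ : Bool, step (o 0 ^^ false ^^ s₁) + step (o 1 ^^ s₁ ^^ s₂) +
      step (o 2 ^^ s₂ ^^ s₃) + step (o 3 ^^ s₃ ^^ b) = t := by
    generalize o 0 = o₀, o 1 = o₁, o 2 = o₂, o 3 = o₃
    revert o₀ o₁ o₂ o₃ b t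
    decide
  refine ⟨fun | 0 => false | 1 => s₁ | 2 => s₂ | 3 => s₃ | _ => b, rfl, rfl, ?_⟩
  simpa [sum_range_succ] using h

theorem AllDisplacementsReachable.succ {k : ℕ} (hk : AllDisplacementsReachable k) :
    AllDisplacementsReachable (k + 1) := by
  intro o b t _
  obtain ⟨e, he⟩ := exists_step_ne t
  obtain ⟨s, hs0, hsk, hsum⟩ :=
    hk o (o k ^^ b ^^ e) (t - step e) (sub_ne_zero.2 (Ne.symm he))
  refine ⟨Function.update s (k + 1) b, by simp [hs0], by simp, ?_⟩
  have hprefix : ∀ i ∈ range k, step (o i ^^ Function.update s (k + 1) b i ^^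
      Function.update s (k + 1) b (i + 1)) = step (o i ^^ s i ^^ s (i + 1)) := by
    intro i hi
    have := mem_range.1 hi
    rw [Function.update_of_ne (by omega), Function.update_of_ne (by omega)]
  rw [sum_range_succ, sum_congr rfl hprefix, hsum, Function.update_of_ne (by omega),
    Function.update_self, hsk]
  have hlast : (o k ^^ (o k ^^ b ^^ e) ^^ b) = e := by
    cases o k <;> cases b <;> cases e <;> rfl
  rw [hlast, sub_add_cancel]

theorem allDisplacementsReachable {k : ℕ} (hk : 4 ≤ k) : AllDisplacementsReachable k := by
  induction k, hk using Nat.le_induction with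
  | base => exact allDisplacementsReachable_four
  | succ k _ ih => exact ih.succ

open Classical in
noncomputable def pathOrientation {m : ℕ} (G : OGraph (Fin m)) (i : ℕ) : Bool :=
  decide (∃ h : i + 1 < m, G.arc ⟨i, by omega⟩ ⟨i + 1, h⟩)

open Classical in
theorem pathOrientation_eq {m : ℕ} (G : OGraph (Fin m)) {u v : Fin m} (h : u.val + 1 = v.val) :
    pathOrientation G u = decide (G.arc u v) := by
  obtain ⟨v, hv⟩ := v
  subst h
  simp [pathOrientation, hv]

/-- For any oriented path on `m` vertices `a₀, …, a_{m-1}` of length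
`m - 1 ≥ 4` and any assignment of distinct vertices of the directed 3-cycle to the two
endpoints, one can push a subset of the internal vertices so that the resulting oriented
path admits a homomorphism to the directed 3-cycle extending that assignment. -/
theorem path_push_hom_to_C3 (m : ℕ) (hm : 5 ≤ m) (G : OGraph (Fin m))
    (hpath_only : ∀ i j : Fin m, G.arc i j → i.val + 1 = j.val ∨ j.val + 1 = i.val)
    (ψ₀ ψ₁ : Fin 3) (hψ : ψ₀ ≠ ψ₁) :
    ∃ (S : Set (Fin m)) (f : Fin m → Fin 3),
      (∀ i ∈ S, i ≠ ⟨0, by omega⟩ ∧ i ≠ ⟨m - 1, by omega⟩) ∧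
      OGraph.IsHom (G.push S) C3 f ∧
      f ⟨0, by omega⟩ = ψ₀ ∧ f ⟨m - 1, by omega⟩ = ψ₁ := by
  obtain ⟨s, hs0, hsm, hsum⟩ := allDisplacementsReachable (k := m - 1) (by omega)
    (pathOrientation G) false (ψ₁ - ψ₀) (sub_ne_zero.2 hψ.symm)
  refine ⟨{v | s v = true}, fun v => walk ψ₀ (fun i => pathOrientation G i ^^ s i ^^ s (i + 1)) v,
    ?_, ?_, by simp [walk], ?_⟩
  · intro v hv
    constructor <;> rintro rfl <;> simp_all
  · refine isHom_C3_walk _ _ _ fun a b hab => ?_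
    obtain ⟨hfwd, hbwd⟩ := G.push_arc_decide_xor (fun v => s v) hab
    have hadj : a.val + 1 = b.val ∨ b.val + 1 = a.val :=
      (G.arc_or_arc_of_push_arc hab).elim (hpath_only a b) fun h => (hpath_only b a h).symm
    rcases hadj with h | h
    · exact Or.inl ⟨h, by rwa [pathOrientation_eq G h, h]⟩
    · exact Or.inr ⟨h, by rwa [pathOrientation_eq G h, h]⟩
  · simp only [walk, hsum, add_sub_cancel]
end

section
/- Every orientation of every outerplanar graph with girth at least 5 can be pushed (reversing arcs at some vertex set) to admit a homomorphism to the directed 3-cycle; hence the push chromatic number of the family of outerplanar graphs of girth at least 5 is 3 (and it is at least 3 because odd cycles have push chromatic number at least 3). -/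
/-- A finite graph is outerplanar iff its vertices can be placed (injectively) on a line
(equivalently, on a circle with all vertices on the outer face) so that no two edges
cross: there are no edges `ab`, `cd` with `a < c < b < d` in the order. -/
def IsOuterplanar {V : Type} (G : SimpleGraph V) : Prop :=
  ∃ f : V → ℕ, Function.Injective f ∧
    ∀ a b c d : V, G.Adj a b → G.Adj c d → ¬ (f a < f c ∧ f c < f b ∧ f b < f d)

/-! Every orientation of an outerplanar graph of girth at least 5 admits a homomorphism to the
oriented graph `Z6` on `ℤ/6` with arcs `z → z + 1` and `z → z + 2`. Via `z ↦ (z mod 2, 2z mod 3)`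
this graph maps to the anti-twinned graph `R(C3)`, and a homomorphism to `R(K)` is the same as a
homomorphism to `K` after pushing the vertices sent to the primed copy.

The homomorphism to `Z6` is built by induction on the vertex set. A vertex with at most one
neighbour extends trivially. Otherwise take, in the linear order of the outerplanar embedding, an
innermost chord `ab` with vertices between its ends: those vertices form a path from `a` to `b`
whose inner vertices have degree 2, so by the girth assumption there is either a 5-face with three
consecutive degree-2 vertices or a path through four degree-2 vertices. Along an oriented path of
length `k` the endpoints reachable in `Z6` from a fixed start are `k + 1` consecutive residues, so
the colouring extends over the inner vertices of such a path.

For tightness, every push of the directed 5-cycle still contains a directed path of length 2, and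
such a path has no homomorphic image in an oriented graph on two vertices. -/

namespace OGraph

variable {V W : Type}

lemma IsHom.comp {U : Type} {G : OGraph U} {K : OGraph V} {L : OGraph W} {f : U → V}
    {g : V → W} (hg : IsHom K L g) (hf : IsHom G K f) : IsHom G L (g ∘ f) :=
  fun _ _ h => hg _ _ (hf _ _ h)

lemma exists_isHom_push_of_isHom_antiTwin {G : OGraph V} {K : OGraph W} {h : V → W ⊕ W}
    (hh : IsHom G K.antiTwin h) : ∃ (S : Set V) (f : V → W), IsHom (G.push S) K f := by
  refine ⟨{v | (h v).isRight}, fun v => Sum.elim id id (h v), ?_⟩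
  rintro u v (⟨hS, hvu⟩ | ⟨hS, huv⟩) <;> dsimp only
  · have hS' : Xor (h u).isRight (h v).isRight := hS
    have := hh v u hvu
    revert hS' this
    generalize h u = p, h v = q
    rcases p with a | a <;> rcases q with b | b <;> simp [antiTwin]
  · have hS' : ¬ Xor (h u).isRight (h v).isRight := hS
    have := hh u v huv
    revert hS' this
    generalize h u = p, h v = q
    rcases p with a | a <;> rcases q with b | b <;> simp [antiTwin]

lemma not_isHom_of_arc_of_arc [Fintype W] (hW : Fintype.card W ≤ 2) {G : OGraph V} {x y z : V}
    (hxy : G.arc x y) (hyz : G.arc y z) (K : OGraph W) (f : V → W) : ¬ G.IsHom K f := by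
  classical
  intro hf
  have hxy' := hf _ _ hxy
  have hyz' := hf _ _ hyz
  have hxz : f x = f z := by
    by_contra hne
    have hxy_ne : f x ≠ f y := fun h => K.asymm _ _ hxy' (h ▸ hxy')
    have hyz_ne : f y ≠ f z := fun h => K.asymm _ _ hyz' (h ▸ hyz')
    have hcard : ({f x, f y, f z} : Finset W).card = 3 :=
      Finset.card_eq_three.2 ⟨_, _, _, hxy_ne, hne, hyz_ne, rfl⟩
    have := Finset.card_le_univ ({f x, f y, f z} : Finset W)
    omega
  exact K.asymm _ _ hxy' (hxz ▸ hyz')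

def IsHomOn (H : OGraph V) (K : OGraph W) (h : V → W) (s : Finset V) : Prop :=
  ∀ u ∈ s, ∀ v ∈ s, H.arc u v → K.arc (h u) (h v)

def IsHomAlong (H : OGraph V) (K : OGraph W) (x : ℕ → V) (z : ℕ → W) (k : ℕ) : Prop :=
  ∀ i < k, (H.arc (x i) (x (i + 1)) → K.arc (z i) (z (i + 1))) ∧
    (H.arc (x (i + 1)) (x i) → K.arc (z (i + 1)) (z i))

lemma IsHomAlong.update_succ {H : OGraph V} {K : OGraph W} {x : ℕ → V} {z : ℕ → W} {k : ℕ}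
    (hz : IsHomAlong H K x z k) {w : W} (hfwd : H.arc (x k) (x (k + 1)) → K.arc (z k) w)
    (hbwd : H.arc (x (k + 1)) (x k) → K.arc w (z k)) :
    IsHomAlong H K x (Function.update z (k + 1) w) (k + 1) := by
  intro i hi
  rcases Nat.lt_succ_iff_lt_or_eq.mp hi with hi | rfl
  · simpa [Function.update_of_ne (show i ≠ k + 1 by omega),
      Function.update_of_ne (show i + 1 ≠ k + 1 by omega)] using hz i hi
  · simpa [Function.update_of_ne (show i ≠ i + 1 by omega)] using And.intro hfwd hbwd

end OGraph

open OGraph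

instance : DecidableRel C3.antiTwin.arc
  | .inl u, .inl v | .inr u, .inr v => inferInstanceAs (Decidable (v = u + 1))
  | .inl u, .inr v | .inr u, .inl v => inferInstanceAs (Decidable (u = v + 1))

def Z6 : OGraph (ZMod 6) where
  arc u v := v - u = 1 ∨ v - u = 2
  asymm := by decide

namespace Z6

instance : DecidableRel Z6.arc := fun u v => inferInstanceAs (Decidable (v - u = 1 ∨ v - u = 2))

/-- By the Chinese remainder theorem `z ↦ (z mod 2, z mod 3)`; after doubling the second
coordinate, the step `+2` becomes `(0, +1)` (an arc of `C3` in the same copy) and the step `+1`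
becomes `(1, -1)` (a reversed arc of `C3` into the other copy). -/
def toAntiTwinC3 (z : ZMod 6) : Fin 3 ⊕ Fin 3 :=
  if (ZMod.cast z : ZMod 2) = 0 then .inl (2 * ZMod.cast z : ZMod 3)
  else .inr (2 * ZMod.cast z : ZMod 3)

lemma isHom_toAntiTwinC3 : Z6.IsHom C3.antiTwin toAntiTwinC3 := by
  unfold OGraph.IsHom toAntiTwinC3
  decide

lemma exists_arc (a : ZMod 6) : (∃ b, Z6.arc a b) ∧ ∃ b, Z6.arc b a :=
  ⟨⟨a + 1, .inl (by ring)⟩, ⟨a - 1, .inl (by ring)⟩⟩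

variable {V : Type} (H : OGraph V) (x : ℕ → V)

/-- The condition `2 * c = 2 * k` says `c ≡ k (mod 3)`: a forward step adds `1` to `c`, a
backward step subtracts `2`. -/
lemma exists_isHomAlong_interval (a : ZMod 6) (k : ℕ) :
    ∃ c : ZMod 6, 2 * c = 2 * k ∧
      ∀ j ≤ k, ∃ z, z 0 = a ∧ z k = a + c + j ∧ IsHomAlong H Z6 x z k := by
  induction k with
  | zero => exact ⟨0, by simp, fun j hj => ⟨fun _ => a, rfl, by simp [Nat.le_zero.mp hj],
      fun i hi => absurd hi (Nat.not_lt_zero i)⟩⟩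
  | succ k ih =>
    obtain ⟨c, hc, hwalk⟩ := ih
    have extend : ∀ j ≤ k, ∀ w : ZMod 6,
        (H.arc (x k) (x (k + 1)) → Z6.arc (a + c + j) w) →
        (H.arc (x (k + 1)) (x k) → Z6.arc w (a + c + j)) →
        ∃ z, z 0 = a ∧ z (k + 1) = w ∧ IsHomAlong H Z6 x z (k + 1) := by
      intro j hj w hfwd hbwd
      obtain ⟨z, hz0, hzk, hz⟩ := hwalk j hj
      exact ⟨_, by simp [hz0], by simp, hz.update_succ (hzk ▸ hfwd) (hzk ▸ hbwd)⟩
    by_cases hfwd : H.arc (x k) (x (k + 1))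
    · have hbwd : ¬ H.arc (x (k + 1)) (x k) := H.asymm _ _ hfwd
      refine ⟨c + 1, by push_cast; linear_combination hc, fun j hj => ?_⟩
      rcases Nat.le_succ_iff.mp hj with hj | rfl
      · exact extend j hj _ (fun _ => .inl (by ring)) (absurd · hbwd)
      · exact extend k le_rfl _ (fun _ => .inr (by push_cast; ring)) (absurd · hbwd)
    · refine ⟨c - 2, ?_, fun j hj => ?_⟩
      · push_cast
        linear_combination (norm := ring_nf) hc
        reduce_mod_char
      rcases Nat.le_succ_iff.mp hj with hj | rfl
      · exact extend j hj _ (absurd · hfwd) (fun _ => .inr (by ring))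
      · exact extend k le_rfl _ (absurd · hfwd) (fun _ => .inl (by push_cast; ring))

lemma exists_isHomAlong_five (a b : ZMod 6) : ∃ z, z 0 = a ∧ z 5 = b ∧ IsHomAlong H Z6 x z 5 := by
  obtain ⟨c, -, hwalk⟩ := exists_isHomAlong_interval H x a 5
  obtain ⟨z, hz0, hz5, hz⟩ := hwalk (b - a - c).val (Nat.le_of_lt_succ (ZMod.val_lt _))
  exact ⟨z, hz0, by rw [hz5, ZMod.natCast_zmod_val]; ring, hz⟩

lemma exists_isHomAlong_four {a b : ZMod 6} (hab : Z6.arc a b ∨ Z6.arc b a) :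
    ∃ z, z 0 = a ∧ z 4 = b ∧ IsHomAlong H Z6 x z 4 := by
  obtain ⟨c, hc, hwalk⟩ := exists_isHomAlong_interval H x a 4
  -- The only residue missed is `a + c - 1`, and `c ≡ 1 (mod 3)` puts it at distance 0 or 3
  -- from `a`.
  have hmiss : ∀ a b c : ZMod 6, 2 * c = 2 * 4 → (Z6.arc a b ∨ Z6.arc b a) →
      (b - a - c).val ≤ 4 := by
    decide
  obtain ⟨z, hz0, hz4, hz⟩ := hwalk (b - a - c).val (hmiss a b c (by exact_mod_cast hc) hab)
  exact ⟨z, hz0, by rw [hz4, ZMod.natCast_zmod_val]; ring, hz⟩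

end Z6

namespace SimpleGraph

variable {V : Type} {G : SimpleGraph V}

theorem five_le_girth_iff (hG : ¬ G.IsAcyclic) :
    5 ≤ G.girth ↔ (∀ a b c, G.Adj a b → G.Adj b c → ¬ G.Adj c a) ∧
      ∀ a b c d, a ≠ c → b ≠ d → G.Adj a b → G.Adj b c → G.Adj c d → ¬ G.Adj d a := by
  constructor
  · intro hg
    refine ⟨fun a b c hab hbc hca => ?_, fun a b c d hac hbd hab hbc hcd hda => ?_⟩
    · have hw : (Walk.cons hab (.cons hbc (.cons hca .nil))).IsCycle := by
        simp [Walk.cons_isCycle_iff, hab.ne, hbc.ne, hca.ne, hca.ne.symm, hab.ne.symm]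
      have := hg.trans (girth_le_length hw)
      simp at this
    · have hw : (Walk.cons hab (.cons hbc (.cons hcd (.cons hda .nil)))).IsCycle := by
        simp [Walk.cons_isCycle_iff, hab.ne, hbc.ne, hcd.ne, hda.ne, hac, hbd, hab.ne.symm,
          hda.ne.symm, hac.symm]
      have := hg.trans (girth_le_length hw)
      simp at this
  · rintro ⟨no_triangle, no_square⟩
    obtain ⟨a, w, hw, hlen⟩ := exists_girth_eq_length.2 hG
    rw [hlen]
    by_contra! hlt
    have h3 := hw.three_le_length
    rcases w with _ | ⟨h₁, _ | ⟨h₂, _ | ⟨h₃, _ | ⟨h₄, _ | ⟨h₅, w⟩⟩⟩⟩⟩ <;>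
      simp only [Walk.length_cons, Walk.length_nil] at hlt h3 <;> try omega
    · exact no_triangle _ _ _ h₁ h₂ h₃
    · simp only [Walk.cons_isCycle_iff, Walk.cons_isPath_iff, Walk.support_cons,
        Walk.support_nil, List.mem_cons, List.not_mem_nil] at hw
      exact no_square _ _ _ _ (by tauto) (by tauto) h₁ h₂ h₃ h₄

def MinDegreeTwoOn (G : SimpleGraph V) (s : Finset V) : Prop :=
  ∀ v ∈ s, ∃ w₁ ∈ s, ∃ w₂ ∈ s, w₁ ≠ w₂ ∧ G.Adj v w₁ ∧ G.Adj v w₂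

structure IsThread (G : SimpleGraph V) (s : Finset V) (x : ℕ → V) (k : ℕ) : Prop where
  injOn : Set.InjOn x (Set.Iic k)
  mem : ∀ i ≤ k, x i ∈ s
  eq_of_adj : ∀ i, 0 < i → i < k → ∀ w ∈ s, G.Adj (x i) w → w = x (i - 1) ∨ w = x (i + 1)

lemma isThread_of_lt_succ {s : Finset V} {x : ℕ → V} {k : ℕ} (fl : V → ℕ)
    (hlt : ∀ i < k, fl (x i) < fl (x (i + 1))) (hmem : ∀ i ≤ k, x i ∈ s)
    (hadj : ∀ i, 0 < i → i < k → ∀ w ∈ s, G.Adj (x i) w → w = x (i - 1) ∨ w = x (i + 1)) :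
    G.IsThread s x k :=
  ⟨(strictMonoOn_Iic_of_lt_succ (ψ := fl ∘ x) (by simpa using hlt)).injOn.of_comp, hmem, hadj⟩

namespace IsThread

variable [DecidableEq V] {s : Finset V} {x : ℕ → V} {k : ℕ}

lemma sdiff_ssubset (hx : G.IsThread s x k) (hk : 1 < k) : s \ (Finset.Ioo 0 k).image x ⊂ s :=
  Finset.sdiff_ssubset
    (fun _ hv => by
      obtain ⟨i, hi, rfl⟩ := Finset.mem_image.1 hv
      exact hx.mem i (Finset.mem_Ioo.1 hi).2.le)
    ⟨x 1, Finset.mem_image_of_mem x (Finset.mem_Ioo.2 ⟨one_pos, hk⟩)⟩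

lemma mem_sdiff (hx : G.IsThread s x k) {i : ℕ} (hi : i = 0 ∨ i = k) :
    x i ∈ s \ (Finset.Ioo 0 k).image x := by
  have hik : i ≤ k := by omega
  refine Finset.mem_sdiff.2 ⟨hx.mem i hik, fun hmem => ?_⟩
  obtain ⟨j, hj, hji⟩ := Finset.mem_image.1 hmem
  rw [Finset.mem_Ioo] at hj
  have := hx.injOn (Set.mem_Iic.2 hj.2.le) (Set.mem_Iic.2 hik) hji
  omega

end IsThread

end SimpleGraph

namespace OGraph

variable {V W : Type} [DecidableEq V]

lemma exists_eq_along_of_injOn {x : ℕ → V} {k : ℕ} (hx : Set.InjOn x (Set.Iic k)) (h : V → W)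
    {z : ℕ → W} (hz0 : z 0 = h (x 0)) (hzk : z k = h (x k)) :
    ∃ h' : V → W, (∀ i ≤ k, h' (x i) = z i) ∧ ∀ v ∉ (Finset.Ioo 0 k).image x, h' v = h v := by
  classical
  set h' : V → W := fun v =>
    if v ∈ x '' Set.Iic k then z (Function.invFunOn x (Set.Iic k) v) else h v with h'_def
  have hx' : ∀ i ≤ k, h' (x i) = z i := fun i hi => by
    simp only [h'_def, if_pos (Set.mem_image_of_mem x (Set.mem_Iic.2 hi)),
      hx.leftInvOn_invFunOn (Set.mem_Iic.2 hi)]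
  refine ⟨h', hx', fun v hv => ?_⟩
  by_cases hvx : v ∈ x '' Set.Iic k
  · obtain ⟨i, hi, rfl⟩ := hvx
    rw [Set.mem_Iic] at hi
    obtain rfl | rfl : i = 0 ∨ i = k := by
      by_contra! hik
      exact hv (Finset.mem_image_of_mem x (Finset.mem_Ioo.2 ⟨by omega, by omega⟩))
    · rw [hx' 0 hi, hz0]
    · rw [hx' _ le_rfl, hzk]
  · simp only [h'_def, if_neg hvx]

variable {G : SimpleGraph V} {H : OGraph V} {K : OGraph W} {s : Finset V} {h : V → W}

lemma IsHomOn.extend_of_subsingleton_adj (hH : ∀ u v, H.arc u v → G.Adj u v)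
    (hK : ∀ a, (∃ b, K.arc a b) ∧ ∃ b, K.arc b a) {v : V}
    (hv : ∀ w₁ ∈ s, ∀ w₂ ∈ s, G.Adj v w₁ → G.Adj v w₂ → w₁ = w₂)
    (hh : IsHomOn H K h (s.erase v)) : ∃ h', IsHomOn H K h' s := by
  by_cases hw : ∃ w ∈ s, G.Adj v w
  · obtain ⟨w, hws, hvw⟩ := hw
    obtain ⟨c, hcw, hwc⟩ : ∃ c, (H.arc v w → K.arc c (h w)) ∧ (H.arc w v → K.arc (h w) c) := by
      by_cases hvw' : H.arc v w
      · obtain ⟨c, hc⟩ := (hK (h w)).2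
        exact ⟨c, fun _ => hc, fun hwv => absurd hvw' (H.asymm _ _ hwv)⟩
      · obtain ⟨c, hc⟩ := (hK (h w)).1
        exact ⟨c, (absurd · hvw'), fun _ => hc⟩
    refine ⟨Function.update h v c, fun p hp q hq hpq => ?_⟩
    by_cases hpv : p = v
    · subst hpv
      obtain rfl := hv q hq w hws (hH _ _ hpq) hvw
      simpa [Function.update_of_ne hvw.ne'] using hcw hpq
    by_cases hqv : q = v
    · subst hqv
      obtain rfl := hv p hp w hws (hH _ _ hpq).symm hvw
      simpa [Function.update_of_ne hvw.ne'] using hwc hpq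
    simpa [Function.update_of_ne hpv, Function.update_of_ne hqv] using
      hh p (Finset.mem_erase.2 ⟨hpv, hp⟩) q (Finset.mem_erase.2 ⟨hqv, hq⟩) hpq
  · push Not at hw
    refine ⟨h, fun p hp q hq hpq => hh p (Finset.mem_erase.2 ⟨?_, hp⟩) q
      (Finset.mem_erase.2 ⟨?_, hq⟩) hpq⟩
    · rintro rfl; exact hw q hq (hH _ _ hpq)
    · rintro rfl; exact hw p hp (hH _ _ hpq).symm

lemma IsHomOn.extend_along_thread (hH : ∀ u v, H.arc u v → G.Adj u v) {x : ℕ → V} {k : ℕ}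
    (hx : G.IsThread s x k) (hh : IsHomOn H K h (s \ (Finset.Ioo 0 k).image x))
    {z : ℕ → W} (hz0 : z 0 = h (x 0)) (hzk : z k = h (x k)) (hz : IsHomAlong H K x z k) :
    ∃ h', IsHomOn H K h' s := by
  obtain ⟨h', hx', hout⟩ := exists_eq_along_of_injOn hx.injOn h hz0 hzk
  have hstep : IsHomAlong H K x (h' ∘ x) k := fun j hj => by
    simpa only [Function.comp_apply, hx' j hj.le, hx' (j + 1) hj] using hz j hj
  have hinterior : ∀ i, 0 < i → i < k → ∀ w ∈ s,
      (H.arc (x i) w → K.arc (h' (x i)) (h' w)) ∧ (H.arc w (x i) → K.arc (h' w) (h' (x i))) := by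
    rintro i hi0 hik w hw
    obtain ⟨j, rfl⟩ : ∃ j, i = j + 1 := ⟨i - 1, by omega⟩
    have hadj : ∀ w ∈ s, G.Adj (x (j + 1)) w → w = x j ∨ w = x (j + 1 + 1) := by
      simpa using hx.eq_of_adj (j + 1) hi0 hik
    constructor <;> intro harc
    · rcases hadj w hw (hH _ _ harc) with rfl | rfl
      exacts [(hstep j (by omega)).2 harc, (hstep (j + 1) hik).1 harc]
    · rcases hadj w hw (hH _ _ harc).symm with rfl | rfl
      exacts [(hstep j (by omega)).1 harc, (hstep (j + 1) hik).2 harc]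
  refine ⟨h', fun u hu v hv huv => ?_⟩
  by_cases hu' : u ∈ (Finset.Ioo 0 k).image x
  · obtain ⟨i, hi, rfl⟩ := Finset.mem_image.1 hu'
    rw [Finset.mem_Ioo] at hi
    exact (hinterior i hi.1 hi.2 v hv).1 huv
  by_cases hv' : v ∈ (Finset.Ioo 0 k).image x
  · obtain ⟨i, hi, rfl⟩ := Finset.mem_image.1 hv'
    rw [Finset.mem_Ioo] at hi
    exact (hinterior i hi.1 hi.2 u hu).2 huv
  rw [hout u hu', hout v hv']
  exact hh u (Finset.mem_sdiff.2 ⟨hu, hu'⟩) v (Finset.mem_sdiff.2 ⟨hv, hv'⟩) huv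

end OGraph

section Outerplanar

open SimpleGraph

variable {V : Type} {G : SimpleGraph V} {fl : V → ℕ} {s : Finset V} {a b : V}

def NoCrossing (G : SimpleGraph V) (fl : V → ℕ) : Prop :=
  ∀ a b c d : V, G.Adj a b → G.Adj c d → ¬ (fl a < fl c ∧ fl c < fl b ∧ fl b < fl d)

structure IsMinimalChord (G : SimpleGraph V) (fl : V → ℕ) (s : Finset V) (a b : V) : Prop where
  left_mem : a ∈ s
  right_mem : b ∈ s
  adj : G.Adj a b
  exists_between : ∃ z ∈ s, fl a < fl z ∧ fl z < fl b
  eq_of_between : ∀ u ∈ s, ∀ v ∈ s, G.Adj u v → fl a ≤ fl u → fl v ≤ fl b →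
    (∃ z ∈ s, fl u < fl z ∧ fl z < fl v) → u = a ∧ v = b

lemma exists_isMinimalChord (hfl : Function.Injective fl) (hdeg : G.MinDegreeTwoOn s)
    (hs : s.Nonempty) : ∃ a b, IsMinimalChord G fl s a b := by
  classical
  set E := (s ×ˢ s).filter fun p : V × V =>
    G.Adj p.1 p.2 ∧ ∃ z ∈ s, fl p.1 < fl z ∧ fl z < fl p.2 with hE
  have hEne : E.Nonempty := by
    obtain ⟨m, hm, hmax⟩ := s.exists_max_image fl hs
    obtain ⟨w₁, hw₁, w₂, hw₂, hne, h₁, h₂⟩ := hdeg m hm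
    have hlt : ∀ w ∈ s, G.Adj m w → fl w < fl m := fun w hw hmw =>
      (hmax w hw).lt_of_ne fun h => hmw.ne' (hfl h)
    rcases (hfl.ne hne).lt_or_gt with h | h
    · exact ⟨(w₁, m), by simpa [hE, hw₁, hm, h₁.symm] using ⟨w₂, hw₂, h, hlt w₂ hw₂ h₂⟩⟩
    · exact ⟨(w₂, m), by simpa [hE, hw₂, hm, h₂.symm] using ⟨w₁, hw₁, h, hlt w₁ hw₁ h₁⟩⟩
  obtain ⟨⟨a, b⟩, hab, hmin⟩ := E.exists_min_image (fun p => fl p.2 - fl p.1) hEne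
  simp only [hE, Finset.mem_filter, Finset.mem_product] at hab
  obtain ⟨⟨ha, hb⟩, hadj, hbetween⟩ := hab
  refine ⟨a, b, ha, hb, hadj, hbetween, fun u hu v hv huv hau hvb huv' => ?_⟩
  have hspan : fl b - fl a ≤ fl v - fl u := hmin (u, v) (by simp [hE, hu, hv, huv, huv'])
  obtain ⟨z, -, hz₁, hz₂⟩ := huv'
  exact ⟨hfl (by omega), hfl (by omega)⟩

namespace IsMinimalChord

lemma mem_Icc_of_adj (hcross : NoCrossing G fl) (hab : IsMinimalChord G fl s a b) {v w : V}
    (hav : fl a < fl v) (hvb : fl v < fl b) (hvw : G.Adj v w) : fl a ≤ fl w ∧ fl w ≤ fl b := by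
  constructor
  · by_contra! h
    exact hcross w v a b hvw.symm hab.adj ⟨h, hav, hvb⟩
  · by_contra! h
    exact hcross a b v w hab.adj hvw ⟨hav, hvb, h⟩

lemma eq_of_adj_of_lt (hfl : Function.Injective fl) (hcross : NoCrossing G fl)
    (hab : IsMinimalChord G fl s a b) {v w₁ w₂ : V} (hv : v ∈ s) (hav : fl a < fl v)
    (hvb : fl v < fl b) (hw₁ : w₁ ∈ s) (hw₂ : w₂ ∈ s) (h₁ : G.Adj v w₁) (h₂ : G.Adj v w₂)
    (hlt₁ : fl w₁ < fl v) (hlt₂ : fl w₂ < fl v) : w₁ = w₂ := by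
  have key : ∀ p ∈ s, ∀ q ∈ s, G.Adj v p → fl p < fl q → fl q < fl v → False :=
    fun p hp q hq hvp hpq hqv => hvb.ne (congrArg fl (hab.eq_of_between p hp v hv hvp.symm
      (hab.mem_Icc_of_adj hcross hav hvb hvp).1 hvb.le ⟨q, hq, hpq, hqv⟩).2)
  rcases lt_trichotomy (fl w₁) (fl w₂) with h | h | h
  exacts [(key w₁ hw₁ w₂ hw₂ h₁ h hlt₂).elim, hfl h, (key w₂ hw₂ w₁ hw₁ h₂ h hlt₁).elim]

lemma eq_of_adj_of_gt (hfl : Function.Injective fl) (hcross : NoCrossing G fl)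
    (hab : IsMinimalChord G fl s a b) {v w₁ w₂ : V} (hv : v ∈ s) (hav : fl a < fl v)
    (hvb : fl v < fl b) (hw₁ : w₁ ∈ s) (hw₂ : w₂ ∈ s) (h₁ : G.Adj v w₁) (h₂ : G.Adj v w₂)
    (hgt₁ : fl v < fl w₁) (hgt₂ : fl v < fl w₂) : w₁ = w₂ := by
  have key : ∀ p ∈ s, ∀ q ∈ s, G.Adj v q → fl v < fl p → fl p < fl q → False :=
    fun p hp q hq hvq hvp hpq => hav.ne' (congrArg fl (hab.eq_of_between v hv q hq hvq
      hav.le (hab.mem_Icc_of_adj hcross hav hvb hvq).2 ⟨p, hp, hvp, hpq⟩).1)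
  rcases lt_trichotomy (fl w₁) (fl w₂) with h | h | h
  exacts [(key w₁ hw₁ w₂ hw₂ h₂ hgt₁ h).elim, hfl h, (key w₂ hw₂ w₁ hw₁ h₁ hgt₂ h).elim]

lemma exists_adj_lt (hfl : Function.Injective fl) (hcross : NoCrossing G fl)
    (hdeg : G.MinDegreeTwoOn s) (hab : IsMinimalChord G fl s a b) {v : V} (hv : v ∈ s)
    (hav : fl a < fl v) (hvb : fl v < fl b) : ∃ p ∈ s, G.Adj v p ∧ fl p < fl v := by
  obtain ⟨w₁, hw₁, w₂, hw₂, hne, h₁, h₂⟩ := hdeg v hv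
  rcases (hfl.ne h₁.ne').lt_or_gt with hlt₁ | hgt₁
  · exact ⟨w₁, hw₁, h₁, hlt₁⟩
  rcases (hfl.ne h₂.ne').lt_or_gt with hlt₂ | hgt₂
  · exact ⟨w₂, hw₂, h₂, hlt₂⟩
  exact (hne (hab.eq_of_adj_of_gt hfl hcross hv hav hvb hw₁ hw₂ h₁ h₂ hgt₁ hgt₂)).elim

lemma exists_adj_gt_of_adj_lt (hfl : Function.Injective fl) (hcross : NoCrossing G fl)
    (hdeg : G.MinDegreeTwoOn s) (hab : IsMinimalChord G fl s a b) {v p : V} (hv : v ∈ s)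
    (hav : fl a < fl v) (hvb : fl v < fl b) (hp : p ∈ s) (hvp : G.Adj v p) (hpv : fl p < fl v) :
    ∃ r ∈ s, G.Adj v r ∧ fl v < fl r ∧ fl r ≤ fl b ∧ ∀ w ∈ s, G.Adj v w → w = p ∨ w = r := by
  obtain ⟨r, hr, hvr, hvr'⟩ : ∃ r ∈ s, G.Adj v r ∧ fl v < fl r := by
    obtain ⟨w₁, hw₁, w₂, hw₂, hne, h₁, h₂⟩ := hdeg v hv
    rcases (hfl.ne h₁.ne').lt_or_gt with hlt₁ | hgt₁
    · rcases (hfl.ne h₂.ne').lt_or_gt with hlt₂ | hgt₂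
      · exact (hne (hab.eq_of_adj_of_lt hfl hcross hv hav hvb hw₁ hw₂ h₁ h₂ hlt₁ hlt₂)).elim
      · exact ⟨w₂, hw₂, h₂, hgt₂⟩
    · exact ⟨w₁, hw₁, h₁, hgt₁⟩
  refine ⟨r, hr, hvr, hvr', (hab.mem_Icc_of_adj hcross hav hvb hvr).2, fun w hw hvw => ?_⟩
  rcases (hfl.ne hvw.ne').lt_or_gt with hlt | hgt
  · exact .inl (hab.eq_of_adj_of_lt hfl hcross hv hav hvb hw hp hvw hvp hlt hpv)
  · exact .inr (hab.eq_of_adj_of_gt hfl hcross hv hav hvb hw hr hvw hvr hgt hvr')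

lemma exists_adj_left (hfl : Function.Injective fl) (hcross : NoCrossing G fl)
    (hdeg : G.MinDegreeTwoOn s) (hab : IsMinimalChord G fl s a b) :
    ∃ u ∈ s, fl a < fl u ∧ fl u < fl b ∧ G.Adj u a := by
  classical
  obtain ⟨u, hu, hmin⟩ := (s.filter fun z => fl a < fl z ∧ fl z < fl b).exists_min_image fl
    (by simpa [Finset.Nonempty] using hab.exists_between)
  simp only [Finset.mem_filter] at hu hmin
  obtain ⟨hu, hau, hub⟩ := hu
  obtain ⟨p, hp, hup, hpu⟩ := hab.exists_adj_lt hfl hcross hdeg hu hau hub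
  refine ⟨u, hu, hau, hub, ?_⟩
  obtain hap | hap := (hab.mem_Icc_of_adj hcross hau hub hup).1.lt_or_eq
  · exact absurd (hmin p ⟨hp, hap, hpu.trans hub⟩) hpu.not_ge
  · rwa [← hfl hap] at hup

lemma exists_thread (hfl : Function.Injective fl) (hcross : NoCrossing G fl)
    (hdeg : G.MinDegreeTwoOn s) (hg : 5 ≤ G.girth) (hab : IsMinimalChord G fl s a b) :
    ∃ x, G.IsThread s x 5 ∨ (G.IsThread s x 4 ∧ G.Adj (x 0) (x 4)) := by
  obtain ⟨no_triangle, no_square⟩ :=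
    (five_le_girth_iff fun hG => by simp [girth_eq_zero.2 hG] at hg).1 hg
  have step : ∀ p ∈ s, ∀ v ∈ s, fl a < fl v → fl v < fl b → G.Adj v p → fl p < fl v →
      ∃ r ∈ s, G.Adj v r ∧ fl v < fl r ∧ (r = b ∨ fl r < fl b) ∧
        ∀ w ∈ s, G.Adj v w → w = p ∨ w = r := by
    intro p hp v hv hav hvb hvp hpv
    obtain ⟨r, hr, hvr, hvr', hrb, hnbr⟩ :=
      hab.exists_adj_gt_of_adj_lt hfl hcross hdeg hv hav hvb hp hvp hpv
    exact ⟨r, hr, hvr, hvr', (eq_or_ne r b).imp_right fun h => hrb.lt_of_ne (hfl.ne h), hnbr⟩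
  have ha := hab.left_mem
  obtain ⟨u, hu, hau, hub, hua⟩ := hab.exists_adj_left hfl hcross hdeg
  obtain ⟨r₁, hr₁, h₁, hlt₁, rfl | hr₁b, hn₁⟩ := step a ha u hu hau hub hua hau
  · exact (no_triangle a u r₁ hua.symm h₁ hab.adj.symm).elim
  obtain ⟨r₂, hr₂, h₂, hlt₂, rfl | hr₂b, hn₂⟩ := step u hu r₁ hr₁ (by omega) hr₁b h₁.symm hlt₁
  · exact (no_square a u r₁ r₂ (ne_of_apply_ne fl (by omega)) (ne_of_apply_ne fl (by omega))
      hua.symm h₁ h₂ hab.adj.symm).elim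
  obtain ⟨r₃, hr₃, h₃, hlt₃, rfl | hr₃b, hn₃⟩ := step r₁ hr₁ r₂ hr₂ (by omega) hr₂b h₂.symm hlt₂
  · refine ⟨fun i => [a, u, r₁, r₂, r₃].getD i a, .inr ⟨isThread_of_lt_succ fl ?_ ?_ ?_, hab.adj⟩⟩
    · intro i hi; interval_cases i <;> simpa
    · intro i hi; interval_cases i <;> simpa
    · intro i hi0 hik; interval_cases i <;> simpa
  obtain ⟨r₄, hr₄, h₄, hlt₄, -, hn₄⟩ := step r₂ hr₂ r₃ hr₃ (by omega) hr₃b h₃.symm hlt₃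
  refine ⟨fun i => [a, u, r₁, r₂, r₃, r₄].getD i a, .inl (isThread_of_lt_succ fl ?_ ?_ ?_)⟩
  · intro i hi; interval_cases i <;> simpa
  · intro i hi; interval_cases i <;> simpa
  · intro i hi0 hik; interval_cases i <;> simpa

end IsMinimalChord

lemma exists_isHomOn_Z6 [DecidableEq V] (hfl : Function.Injective fl) (hcross : NoCrossing G fl)
    (hg : 5 ≤ G.girth) {H : OGraph V} (hH : H.IsOrientationOf G) (s : Finset V) :
    ∃ h, H.IsHomOn Z6 h s := by
  induction s using Finset.strongInduction with
  | H s ih =>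
  by_cases hdeg : G.MinDegreeTwoOn s
  · rcases s.eq_empty_or_nonempty with rfl | hs
    · exact ⟨0, by simp [OGraph.IsHomOn]⟩
    obtain ⟨a, b, hab⟩ := exists_isMinimalChord hfl hdeg hs
    obtain ⟨x, hx | ⟨hx, hx04⟩⟩ := hab.exists_thread hfl hcross hdeg hg
    · obtain ⟨h, hh⟩ := ih _ (hx.sdiff_ssubset (by norm_num))
      obtain ⟨z, hz0, hz5, hz⟩ := Z6.exists_isHomAlong_five H x (h (x 0)) (h (x 5))
      exact hh.extend_along_thread hH.1 hx hz0 hz5 hz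
    · obtain ⟨h, hh⟩ := ih _ (hx.sdiff_ssubset (by norm_num))
      have h0 := hx.mem_sdiff (i := 0) (.inl rfl)
      have h4 := hx.mem_sdiff (i := 4) (.inr rfl)
      obtain ⟨z, hz0, hz4, hz⟩ := Z6.exists_isHomAlong_four H x
        ((hH.2 _ _ hx04).imp (hh _ h0 _ h4) (hh _ h4 _ h0))
      exact hh.extend_along_thread hH.1 hx hz0 hz4 hz
  · simp only [MinDegreeTwoOn] at hdeg
    push Not at hdeg
    obtain ⟨v, hv, hv1⟩ := hdeg
    obtain ⟨h, hh⟩ := ih _ (Finset.erase_ssubset hv)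
    exact hh.extend_of_subsingleton_adj hH.1 Z6.exists_arc
      fun w₁ hw₁ w₂ hw₂ h₁ h₂ => by_contra fun hne => hv1 w₁ hw₁ w₂ hw₂ hne h₁ h₂

theorem exists_isHom_Z6_of_isOuterplanar [Fintype V] [DecidableEq V] (hG : IsOuterplanar G)
    (hg : 5 ≤ G.girth) {H : OGraph V} (hH : H.IsOrientationOf G) : ∃ h, H.IsHom Z6 h := by
  obtain ⟨fl, hfl, hcross⟩ := hG
  obtain ⟨h, hh⟩ := exists_isHomOn_Z6 hfl hcross hg hH Finset.univ
  exact ⟨h, fun u v huv => hh u (Finset.mem_univ u) v (Finset.mem_univ v) huv⟩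

end Outerplanar

def dirC5 : OGraph (Fin 5) where
  arc i j := j = i + 1
  asymm := by decide

lemma dirC5_isOrientationOf : dirC5.IsOrientationOf (SimpleGraph.cycleGraph 5) := by
  unfold dirC5
  exact ⟨by decide, by decide⟩

/-- The arc `i → i + 1` is reversed iff `Xor (i ∈ S) (i + 1 ∈ S)`. As 5 is odd, reversal cannot
alternate all around the cycle, so at some vertex both incident arcs are reversed or both kept. -/
lemma exists_arc_arc_push_dirC5 (S : Set (Fin 5)) :
    ∃ x y z, (dirC5.push S).arc x y ∧ (dirC5.push S).arc y z := by
  obtain ⟨i, hi⟩ : ∃ i : Fin 5, (Xor (i ∈ S) (i + 1 ∈ S) ↔ Xor (i + 1 ∈ S) (i + 1 + 1 ∈ S)) := by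
    by_contra! h
    have := h 0; have := h 1; have := h 2; have := h 3; have := h 4
    simp only [show (4 + 1 : Fin 5) = 0 from rfl] at *
    tauto
  by_cases hrev : Xor (i ∈ S) (i + 1 ∈ S)
  · exact ⟨i + 1 + 1, i + 1, i, .inl ⟨(hi.1 hrev).symm, rfl⟩, .inl ⟨hrev.symm, rfl⟩⟩
  · exact ⟨i, i + 1, i + 1 + 1, .inr ⟨hrev, rfl⟩, .inr ⟨mt hi.2 hrev, rfl⟩⟩

lemma isOuterplanar_cycleGraph_five : IsOuterplanar (SimpleGraph.cycleGraph 5) :=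
  ⟨Fin.val, Fin.val_injective, by decide⟩

lemma five_le_girth_cycleGraph_five : 5 ≤ (SimpleGraph.cycleGraph 5).girth :=
  (SimpleGraph.five_le_girth_iff fun h => h _ (SimpleGraph.cycleGraph.isCycle_cycle (n := 2))).2
    ⟨by decide, by decide⟩

/-- Every orientation of every outerplanar graph with girth at least 5 can
be pushed to admit a homomorphism to the directed 3-cycle; moreover the bound 3 is tight:
some orientation of some outerplanar graph of girth at least 5 (an odd cycle) admits no
push-homomorphism to any oriented graph on at most 2 vertices. Hence the push chromatic
number of the family of outerplanar graphs of girth at least 5 is 3. -/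
theorem outerplanar_girth5_push_chromatic_three :
    (∀ (n : ℕ) (Gr : SimpleGraph (Fin n)), IsOuterplanar Gr → 5 ≤ Gr.girth →
      ∀ H : OGraph (Fin n), OGraph.IsOrientationOf H Gr →
        ∃ (S : Set (Fin n)) (f : Fin n → Fin 3), OGraph.IsHom (H.push S) C3 f) ∧
    (∃ (n : ℕ) (Gr : SimpleGraph (Fin n)) (H : OGraph (Fin n)),
      IsOuterplanar Gr ∧ 5 ≤ Gr.girth ∧ OGraph.IsOrientationOf H Gr ∧
      ∀ (W : Type) [Fintype W], Fintype.card W ≤ 2 →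
        ∀ (K : OGraph W) (S : Set (Fin n)) (f : Fin n → W),
          ¬ OGraph.IsHom (H.push S) K f) := by
  refine ⟨fun n Gr hout hg H hH => ?_, ⟨5, _, dirC5, isOuterplanar_cycleGraph_five,
    five_le_girth_cycleGraph_five, dirC5_isOrientationOf, fun W _ hW K S f => ?_⟩⟩
  · obtain ⟨h, hh⟩ := exists_isHom_Z6_of_isOuterplanar hout hg hH
    exact OGraph.exists_isHom_push_of_isHom_antiTwin (Z6.isHom_toAntiTwinC3.comp hh)
  · obtain ⟨x, y, z, hxy, hyz⟩ := exists_arc_arc_push_dirC5 S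
    exact OGraph.not_isHom_of_arc_of_arc hW hxy hyz K f
end
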